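/- arXiv:2104.01253 — 3 statements merged into one kernel-verified Lean document; each statement's English description precedes it below -/
import Mathlib

section
/- Let Q be an m×k real matrix with unit-norm columns and let L be the strictly lower triangular part of Q^T Q. Then T := I - L - L^T satisfies T = 2I - Q^T Q, and consequently ‖Q^T Q - I‖ ≤ ε implies ‖T - (Q^T Q)⁻¹‖ ≤ O(ε²) whenever ε < 1; in particular if Q^T Q = I then T = (Q^T Q)⁻¹. -/
/-!
Write `G = QᵀQ = 1 - E`. Since `G` is symmetric with unit diagonal, `G = L + Lᵀ + 1`, so
`T = 2 - G = 1 + E`. When `‖E‖ < 1` the Neumann series gives `G⁻¹ = 1 + E + E² G⁻¹` and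
`‖G⁻¹‖ ≤ (1 - ‖E‖)⁻¹`, hence `T - G⁻¹ = -E² G⁻¹` has norm at most `‖E‖² / (1 - ‖E‖)`.
-/

open Matrix
open scoped Matrix.Norms.L2Operator

namespace Matrix

variable {n α : Type*}

def strictLowerPart [LT n] [DecidableLT n] [Zero α] (G : Matrix n n α) : Matrix n n α :=
  of fun i j => if j < i then G i j else 0

theorem IsSymm.strictLowerPart_add_transpose_add_diagonal [LinearOrder n] [DecidableEq n]
    [AddCommMonoid α] {G : Matrix n n α} (hG : G.IsSymm) :
    G.strictLowerPart + G.strictLowerPartᵀ + diagonal G.diag = G := by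
  ext i j
  rcases lt_trichotomy i j with h | rfl | h
  · simp [strictLowerPart, h, h.ne, not_lt.2 h.le, hG.apply i j]
  · simp [strictLowerPart]
  · simp [strictLowerPart, h, h.ne', not_lt.2 h.le]

theorem IsSymm.one_sub_strictLowerPart_sub_transpose [LinearOrder n] [DecidableEq n] [Ring α]
    {G : Matrix n n α} (hG : G.IsSymm) (hdiag : ∀ i, G i i = 1) :
    1 - G.strictLowerPart - G.strictLowerPartᵀ = 2 - G := by
  have hdiagonal : diagonal G.diag = 1 := by
    rw [← diagonal_one]
    exact congrArg diagonal (funext hdiag)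
  have hdecomp := hG.strictLowerPart_add_transpose_add_diagonal
  rw [hdiagonal] at hdecomp
  calc 1 - G.strictLowerPart - G.strictLowerPartᵀ
      = 1 + 1 - (G.strictLowerPart + G.strictLowerPartᵀ + 1) := by abel
    _ = 2 - G := by rw [hdecomp, one_add_one_eq_two]

theorem l2_opNorm_one_le [Fintype n] [DecidableEq n] : ‖(1 : Matrix n n ℝ)‖ ≤ 1 := by
  rw [cstar_norm_def, map_one]
  exact ContinuousLinearMap.norm_id_le

end Matrix

/- The hypothesis `‖1‖ ≤ 1` replaces `NormOneClass`, which fails for `0 × 0` matrices. -/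
namespace NormedRing

variable {R : Type*} [NormedRing R] [HasSummableGeomSeries R]

theorem norm_inverse_one_sub_le (h1 : ‖(1 : R)‖ ≤ 1) {t : R} (ht : ‖t‖ < 1) :
    ‖Ring.inverse (1 - t)‖ ≤ (1 - ‖t‖)⁻¹ := by
  rw [← geom_series_eq_inverse t ht]
  linarith [tsum_geometric_le_of_norm_lt_one t ht]

theorem one_add_sub_inverse_one_sub {t : R} (ht : ‖t‖ < 1) :
    1 + t - Ring.inverse (1 - t) = -(t ^ 2 * Ring.inverse (1 - t)) := by
  have h := inverse_one_sub_nth_order' 2 ht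
  simp only [Finset.sum_range_succ, Finset.sum_range_zero, pow_zero, pow_one, zero_add] at h
  nth_rewrite 1 [h]
  abel

theorem norm_one_add_sub_inverse_one_sub_le (h1 : ‖(1 : R)‖ ≤ 1) {t : R} (ht : ‖t‖ < 1) :
    ‖1 + t - Ring.inverse (1 - t)‖ ≤ ‖t‖ ^ 2 / (1 - ‖t‖) :=
  calc ‖1 + t - Ring.inverse (1 - t)‖ = ‖t ^ 2 * Ring.inverse (1 - t)‖ := by
        rw [one_add_sub_inverse_one_sub ht, norm_neg]
    _ ≤ ‖t‖ ^ 2 * (1 - ‖t‖)⁻¹ :=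
        (norm_mul_le _ _).trans (mul_le_mul (norm_pow_le' t two_pos)
          (norm_inverse_one_sub_le h1 ht) (norm_nonneg _) (by positivity))
    _ = ‖t‖ ^ 2 / (1 - ‖t‖) := (div_eq_mul_inv _ _).symm

theorem norm_two_sub_sub_inverse_le (h1 : ‖(1 : R)‖ ≤ 1) {a : R} {ε : ℝ}
    (ha : ‖a - 1‖ ≤ ε) (hε : ε < 1) : ‖2 - a - Ring.inverse a‖ ≤ ε ^ 2 / (1 - ε) := by
  set t := 1 - a
  have htε : ‖t‖ ≤ ε := norm_sub_rev a 1 ▸ ha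
  have ht : ‖t‖ < 1 := htε.trans_lt hε
  have hta : a = 1 - t := (sub_sub_cancel 1 a).symm
  calc ‖2 - a - Ring.inverse a‖ = ‖1 + t - Ring.inverse (1 - t)‖ := by
        rw [hta, ← one_add_one_eq_two]; abel_nf
    _ ≤ ‖t‖ ^ 2 / (1 - ‖t‖) := norm_one_add_sub_inverse_one_sub_le h1 ht
    _ ≤ ε ^ 2 / (1 - ε) := by gcongr

end NormedRing

theorem stmt_10 (m k : ℕ) (Q : Matrix (Fin m) (Fin k) ℝ)
    (hdiag : ∀ i : Fin k, (Qᵀ * Q) i i = 1)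
    (L : Matrix (Fin k) (Fin k) ℝ)
    (hL : L = Matrix.of fun i j : Fin k => if j < i then (Qᵀ * Q) i j else 0)
    (T : Matrix (Fin k) (Fin k) ℝ) (hT : T = 1 - L - Lᵀ) :
    T = (2 : ℝ) • (1 : Matrix (Fin k) (Fin k) ℝ) - Qᵀ * Q ∧
    (∀ ε : ℝ, ε < 1 → ‖Qᵀ * Q - 1‖ ≤ ε → ‖T - (Qᵀ * Q)⁻¹‖ ≤ ε ^ 2 / (1 - ε)) ∧
    (Qᵀ * Q = 1 → T = (Qᵀ * Q)⁻¹) := by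
  have hsymm : (Qᵀ * Q).IsSymm := by rw [IsSymm, transpose_mul, transpose_transpose]
  have hT2 : T = 2 - Qᵀ * Q := by
    rw [hT, hL]
    exact hsymm.one_sub_strictLowerPart_sub_transpose hdiag
  rw [two_smul, one_add_one_eq_two, ← hT2]
  refine ⟨rfl, fun ε hε hG => ?_, fun hG => ?_⟩
  · rw [hT2, nonsing_inv_eq_ringInverse]
    exact NormedRing.norm_two_sub_sub_inverse_le l2_opNorm_one_le hG hε
  · rw [hT2, hG, inv_one]
    norm_num
end

section
/- Let Q be an m×k real matrix with orthonormal columns, w, a ∈ R^m, with C = Q^T w, β = w^T w, α = √(β - C^T C) > 0, S' = Q^T a, s = w^T a, u = w - Q C, q = u/α. Then the updated projection coefficient satisfies q^T a = (s - C^T S')/α, and the vector a - Q S' - q (q^T a) is orthogonal to every column of Q and to q. -/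
/-!
Write `C = Qᵀ w` and `u = w - Q C`. Since `Qᵀ Q = 1`, the residual `u` is orthogonal to the columns
of `Q`, and moving `Q` across the dot product gives `u ⬝ x = w ⬝ x - C ⬝ Qᵀ x` for every `x`
(Stephen's trick). With `x = a` this is the formula for `q ⬝ a`; with `x = u` and then `x = w` it
gives the Pythagorean identity `‖u‖² = β - ‖C‖²`, so `α = ‖u‖`. Hence `q = u / ‖u‖` is orthogonal to
the columns of `Q` and is a unit vector, or zero when `u = 0` (as `0⁻¹ = 0`). Removing from `a` its
components along the columns of `Q` and along `q` therefore leaves a vector orthogonal to all of them.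
-/

open Matrix

namespace Matrix

section OrthonormalColumns

variable {m n R : Type*} [Fintype m] [Fintype n] [CommRing R]

theorem dotProduct_mulVec_eq_transpose_mulVec_dotProduct (Q : Matrix m n R) (x : m → R)
    (c : n → R) : x ⬝ᵥ Q *ᵥ c = Qᵀ *ᵥ x ⬝ᵥ c := by
  rw [dotProduct_mulVec, mulVec_transpose]

theorem sub_mulVec_transpose_mulVec_dotProduct (Q : Matrix m n R) (w x : m → R) :
    (w - Q *ᵥ (Qᵀ *ᵥ w)) ⬝ᵥ x = w ⬝ᵥ x - Qᵀ *ᵥ w ⬝ᵥ Qᵀ *ᵥ x := by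
  rw [sub_dotProduct, dotProduct_comm (Q *ᵥ _) x,
    dotProduct_mulVec_eq_transpose_mulVec_dotProduct, dotProduct_comm (Qᵀ *ᵥ x)]

variable [DecidableEq n] {Q : Matrix m n R}

theorem transpose_mulVec_mulVec_eq_self (hQ : Qᵀ * Q = 1) (c : n → R) : Qᵀ *ᵥ (Q *ᵥ c) = c := by
  rw [mulVec_mulVec, hQ, one_mulVec]

theorem transpose_mulVec_sub_mulVec_transpose_mulVec (hQ : Qᵀ * Q = 1) (w : m → R) :
    Qᵀ *ᵥ (w - Q *ᵥ (Qᵀ *ᵥ w)) = 0 := by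
  rw [mulVec_sub, transpose_mulVec_mulVec_eq_self hQ, sub_self]

theorem sub_mulVec_transpose_mulVec_dotProduct_self (hQ : Qᵀ * Q = 1) (w : m → R) :
    (w - Q *ᵥ (Qᵀ *ᵥ w)) ⬝ᵥ (w - Q *ᵥ (Qᵀ *ᵥ w)) = w ⬝ᵥ w - Qᵀ *ᵥ w ⬝ᵥ Qᵀ *ᵥ w := by
  rw [sub_mulVec_transpose_mulVec_dotProduct, transpose_mulVec_sub_mulVec_transpose_mulVec hQ,
    dotProduct_zero, sub_zero, dotProduct_comm, sub_mulVec_transpose_mulVec_dotProduct]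

end OrthonormalColumns

end Matrix

theorem dotProduct_self_eq_one_or_eq_zero_of_eq_inv_sqrt_smul {n : Type*} [Fintype n]
    {u q : n → ℝ} (hq : q = (√(u ⬝ᵥ u))⁻¹ • u) : q ⬝ᵥ q = 1 ∨ q = 0 := by
  by_cases hu : u = 0
  · exact Or.inr (by rw [hq, hu, smul_zero])
  have hpos : 0 < u ⬝ᵥ u :=
    lt_of_le_of_ne (by simpa using dotProduct_self_star_nonneg u)
      (Ne.symm (dotProduct_self_eq_zero.not.mpr hu))
  have hsqrt_ne : √(u ⬝ᵥ u) ≠ 0 := (Real.sqrt_pos.mpr hpos).ne'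
  left
  rw [hq, smul_dotProduct, dotProduct_smul, smul_eq_mul, smul_eq_mul]
  field_simp
  exact (Real.sq_sqrt hpos.le).symm

theorem dotProduct_sub_dotProduct_smul_eq_zero {n : Type*} [Fintype n] {q : n → ℝ}
    (hq : q ⬝ᵥ q = 1 ∨ q = 0) (b : n → ℝ) : q ⬝ᵥ (b - (q ⬝ᵥ b) • q) = 0 := by
  rcases hq with hq | rfl
  · rw [dotProduct_sub, dotProduct_smul, hq, smul_eq_mul, mul_one, sub_self]
  · exact zero_dotProduct _

theorem stmt_14_general (m k : ℕ) (Q : Matrix (Fin m) (Fin k) ℝ) (hQ : Qᵀ * Q = 1)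
    (w a : Fin m → ℝ)
    (C : Fin k → ℝ) (hC : C = Qᵀ.mulVec w)
    (β : ℝ) (hβ : β = w ⬝ᵥ w)
    (α : ℝ) (hα : α = Real.sqrt (β - C ⬝ᵥ C))
    (S' : Fin k → ℝ) (hS' : S' = Qᵀ.mulVec a)
    (s : ℝ) (hs : s = w ⬝ᵥ a)
    (u : Fin m → ℝ) (hu : u = w - Q.mulVec C)
    (q : Fin m → ℝ) (hq : q = α⁻¹ • u)
    (r : Fin m → ℝ) (hr : r = a - Q.mulVec S' - (q ⬝ᵥ a) • q) :
    q ⬝ᵥ a = (s - C ⬝ᵥ S') / α ∧ Qᵀ.mulVec r = 0 ∧ q ⬝ᵥ r = 0 := by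
  subst hC
  have hQq : Qᵀ *ᵥ q = 0 := by
    rw [hq, mulVec_smul, hu, transpose_mulVec_sub_mulVec_transpose_mulVec hQ, smul_zero]
  have hα_norm : α = √(u ⬝ᵥ u) := by
    rw [hα, hβ, hu, sub_mulVec_transpose_mulVec_dotProduct_self hQ]
  have hq_unit : q ⬝ᵥ q = 1 ∨ q = 0 :=
    dotProduct_self_eq_one_or_eq_zero_of_eq_inv_sqrt_smul (hα_norm ▸ hq)
  refine ⟨?_, ?_, ?_⟩
  · rw [hq, smul_dotProduct, hu, sub_mulVec_transpose_mulVec_dotProduct, ← hS', ← hs,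
      smul_eq_mul, inv_mul_eq_div]
  · rw [hr, hS', mulVec_sub, mulVec_sub, mulVec_smul, hQq, smul_zero,
      transpose_mulVec_mulVec_eq_self hQ, sub_self, sub_zero]
  · rw [hr, sub_right_comm, dotProduct_sub, dotProduct_sub_dotProduct_smul_eq_zero hq_unit,
      dotProduct_mulVec_eq_transpose_mulVec_dotProduct, hQq, zero_dotProduct, sub_zero]

theorem stmt_14 (m k : ℕ) (Q : Matrix (Fin m) (Fin k) ℝ) (hQ : Qᵀ * Q = 1)
    (w a : Fin m → ℝ)
    (C : Fin k → ℝ) (hC : C = Qᵀ.mulVec w)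
    (β : ℝ) (hβ : β = w ⬝ᵥ w)
    (α : ℝ) (hα : α = Real.sqrt (β - C ⬝ᵥ C)) (hαpos : 0 < α)
    (S' : Fin k → ℝ) (hS' : S' = Qᵀ.mulVec a)
    (s : ℝ) (hs : s = w ⬝ᵥ a)
    (u : Fin m → ℝ) (hu : u = w - Q.mulVec C)
    (q : Fin m → ℝ) (hq : q = α⁻¹ • u)
    (r : Fin m → ℝ) (hr : r = a - Q.mulVec S' - (q ⬝ᵥ a) • q) :
    q ⬝ᵥ a = (s - C ⬝ᵥ S') / α ∧ Qᵀ.mulVec r = 0 ∧ q ⬝ᵥ r = 0 :=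
  stmt_14_general m k Q hQ w a C hC β hβ α hα S' hS' s hs u hu q hq r hr
end

section
/- Let Q' be m×(j-2) with orthonormal columns, w ∈ R^m with u := w - Q'(Q'^T w) ≠ 0, α := ‖u‖, q := u/α, and let a ∈ R^m be arbitrary. Define S' = Q'^T a, C' = Q'^T w, T_last = (w^T a - C'^T S')/α², T' = S'/α. Then (1/α) a - Q' T' - T_last q = (1/α)(I - Q Q^T) a, where Q = [Q', q]. -/
/-!
Splitting `Q = [Q', q]` gives `Q Qᵀ = Q' Q'ᵀ + q qᵀ`, so the right-hand side is
`α⁻¹ (a - Q' S' - (q ⬝ a) q)`. Moving `Q'` across the dot product gives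
`u ⬝ a = w ⬝ a - C' ⬝ S'`, hence `Tlast = α⁻¹ (q ⬝ a)`, and the two sides agree term by term.
-/

open Matrix

namespace Matrix

variable {m n R : Type*} [Fintype n] [CommRing R]

theorem fromCols_mul_transpose_fromCols {n' : Type*} [Fintype n'] (A : Matrix m n R)
    (B : Matrix m n' R) : fromCols A B * (fromCols A B)ᵀ = A * Aᵀ + B * Bᵀ := by
  rw [transpose_fromCols, fromCols_mul_fromRows]

theorem replicateCol_mul_transpose_mulVec [Fintype m] (q a : m → R) :
    (replicateCol Unit q * (replicateCol Unit q)ᵀ) *ᵥ a = (q ⬝ᵥ a) • q := by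
  rw [transpose_replicateCol, ← vecMulVec_eq, vecMulVec_mulVec, op_smul_eq_smul]

theorem one_sub_mul_transpose_fromCols_replicateCol_mulVec [Fintype m] [DecidableEq m]
    (A : Matrix m n R) (q a : m → R) :
    (1 - fromCols A (replicateCol Unit q) * (fromCols A (replicateCol Unit q))ᵀ) *ᵥ a =
      a - A *ᵥ (Aᵀ *ᵥ a) - (q ⬝ᵥ a) • q := by
  rw [fromCols_mul_transpose_fromCols, sub_mulVec, one_mulVec, add_mulVec,
    replicateCol_mul_transpose_mulVec, ← mulVec_mulVec, sub_sub]

theorem sub_mulVec_mulVec_transpose_dotProduct [Fintype m] (A : Matrix m n R) (w a : m → R) :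
    (w - A *ᵥ (Aᵀ *ᵥ w)) ⬝ᵥ a = w ⬝ᵥ a - (Aᵀ *ᵥ w) ⬝ᵥ (Aᵀ *ᵥ a) := by
  rw [sub_dotProduct, dotProduct_comm (A *ᵥ _), dotProduct_mulVec, ← mulVec_transpose,
    dotProduct_comm (Aᵀ *ᵥ a)]

end Matrix

theorem stmt_15_general (m k : ℕ) (Q' : Matrix (Fin m) (Fin k) ℝ)
    (w a : Fin m → ℝ)
    (C' : Fin k → ℝ) (hC' : C' = Q'ᵀ.mulVec w)
    (u : Fin m → ℝ) (hu : u = w - Q'.mulVec C')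
    (α : ℝ)
    (q : Fin m → ℝ) (hq : q = α⁻¹ • u)
    (Q : Matrix (Fin m) (Fin k ⊕ Unit) ℝ)
    (hQdef : Q = Matrix.fromCols Q' (Matrix.of fun i (_ : Unit) => q i))
    (S' : Fin k → ℝ) (hS' : S' = Q'ᵀ.mulVec a)
    (Tlast : ℝ) (hTlast : Tlast = (w ⬝ᵥ a - C' ⬝ᵥ S') / α ^ 2)
    (T' : Fin k → ℝ) (hT' : T' = α⁻¹ • S') :
    α⁻¹ • a - Q'.mulVec T' - Tlast • q = α⁻¹ • ((1 - Q * Qᵀ).mulVec a) := by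
  have hTlast_u : Tlast = (u ⬝ᵥ a) / α ^ 2 := by
    rw [hTlast, hu, hC', hS', sub_mulVec_mulVec_transpose_dotProduct]
  have hQcol : Q = fromCols Q' (replicateCol Unit q) := hQdef
  rw [hQcol, one_sub_mul_transpose_fromCols_replicateCol_mulVec, ← hS', hT', hTlast_u, hq,
    smul_dotProduct, mulVec_smul]
  module

theorem stmt_15 (m k : ℕ) (Q' : Matrix (Fin m) (Fin k) ℝ) (hQ' : Q'ᵀ * Q' = 1)
    (w a : Fin m → ℝ)
    (C' : Fin k → ℝ) (hC' : C' = Q'ᵀ.mulVec w)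
    (u : Fin m → ℝ) (hu : u = w - Q'.mulVec C') (hune : u ≠ 0)
    (α : ℝ) (hα : α = Real.sqrt (u ⬝ᵥ u))
    (q : Fin m → ℝ) (hq : q = α⁻¹ • u)
    (Q : Matrix (Fin m) (Fin k ⊕ Unit) ℝ)
    (hQdef : Q = Matrix.fromCols Q' (Matrix.of fun i (_ : Unit) => q i))
    (S' : Fin k → ℝ) (hS' : S' = Q'ᵀ.mulVec a)
    (Tlast : ℝ) (hTlast : Tlast = (w ⬝ᵥ a - C' ⬝ᵥ S') / α ^ 2)
    (T' : Fin k → ℝ) (hT' : T' = α⁻¹ • S') :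
    α⁻¹ • a - Q'.mulVec T' - Tlast • q = α⁻¹ • ((1 - Q * Qᵀ).mulVec a) :=
  stmt_15_general m k Q' w a C' hC' u hu α q hq Q hQdef S' hS' Tlast hTlast T' hT'
end
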